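/- arXiv:2407.13263 — 4 statements merged into one kernel-verified Lean document; each statement's English description precedes it below -/
import Mathlib

section
/- Let d, n ≥ 1, Ω ⊆ ℝ^d measurable, and h, σ, s_a, C₁, C₂, C₃ > 0. Let φ₁,…,φ_n ∈ L²(Ω) satisfy ‖φᵢ‖²_{L²(Ω)} ≤ C₁ h^d for every i, and suppose n h^d ≤ C₂. Let f ∈ L²(Ω), c₁,…,c_n ∈ ℝ, and assume ‖ Σᵢ cᵢ φᵢ − f ‖_{L²(Ω)} ≤ C₃ h^{s_a}. Let ξ₁,…,ξ_n be independent square-integrable real random variables with E[ξᵢ] = 0 and E[ξᵢ²] = 1. Then ( E[ ‖ Σᵢ (cᵢ + σ ξᵢ) φᵢ − f ‖²_{L²(Ω)} ] )^{1/2} ≤ √(C₁ C₂) σ + C₃ h^{s_a}. -/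
/-!
Write `Φᵢ, F ∈ L²(Ω)` for the classes of `φᵢ, f`. The noisy residual is `B + ∑ᵢ ξᵢ (σ Φᵢ)`
with the deterministic bias `B = ∑ᵢ cᵢ Φᵢ − F`. Expanding the square, the cross terms with `B`
vanish in expectation because `E ξᵢ = 0`, and independence makes `(ξᵢ)` orthonormal in `L²(μ)`,
so `E ‖B + σ ∑ᵢ ξᵢ Φᵢ‖² = ‖B‖² + σ² ∑ᵢ ‖Φᵢ‖² ≤ (C₃ h^{s_a})² + σ² C₁ C₂`,
and `√(a² + b²) ≤ a + b` for `a, b ≥ 0` finishes.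
-/

open MeasureTheory ProbabilityTheory

open scoped RealInnerProductSpace

namespace MeasureTheory

variable {α E : Type*} {m : MeasurableSpace α} {μ : Measure α} {p : ENNReal}
  [NormedAddCommGroup E]

theorem MemLp.toLp_sum {ι : Type*} (s : Finset ι) {f : ι → α → E} (hf : ∀ i, MemLp (f i) p μ) :
    (memLp_finsetSum' s fun i _ => hf i).toLp (∑ i ∈ s, f i) = ∑ i ∈ s, (hf i).toLp (f i) := by
  classical
  induction s using Finset.induction_on with
  | empty => exact MemLp.toLp_zero _
  | insert a s ha ih =>
    simp only [Finset.sum_insert ha]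
    rw [MemLp.toLp_add (hf a) (memLp_finsetSum' s fun i _ => hf i), ih]

theorem eLpNorm_sum_mul_sub_toReal [Fact (1 ≤ p)] {ι : Type*} [Fintype ι] {φ : ι → α → ℝ}
    (hφ : ∀ i, MemLp (φ i) p μ) {f : α → ℝ} (hf : MemLp f p μ) (a : ι → ℝ) :
    (eLpNorm (fun x => (∑ i, a i * φ i x) - f x) p μ).toReal
      = ‖(∑ i, a i • (hφ i).toLp (φ i)) - hf.toLp f‖ := by
  have hsmul : ∀ i, MemLp (a i • φ i) p μ := fun i => (hφ i).const_smul (a i)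
  have hmem : MemLp (∑ i, a i • φ i) p μ := memLp_finsetSum' _ fun i _ => hsmul i
  have hfun : (fun x => (∑ i, a i * φ i x) - f x) = (∑ i, a i • φ i) - f := by
    ext x; simp [Finset.sum_apply]
  rw [hfun, ← Lp.norm_toLp _ (hmem.sub hf), MemLp.toLp_sub hmem hf, MemLp.toLp_sum _ hsmul]
  exact congr_arg (‖· - hf.toLp f‖)
    (Finset.sum_congr rfl fun i _ => (hφ i).toLp_const_smul (a i))

end MeasureTheory

theorem ProbabilityTheory.iIndepFun.integral_mul_eq_zero {Ω ι : Type*} [MeasurableSpace Ω]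
    {μ : Measure Ω} {ξ : ι → Ω → ℝ} (hindep : iIndepFun ξ μ)
    (hmeas : ∀ i, AEStronglyMeasurable (ξ i) μ) (hmean : ∀ i, ∫ ω, ξ i ω ∂μ = 0) :
    Pairwise fun i j => ∫ ω, ξ i ω * ξ j ω ∂μ = 0 := fun i j hij => by
  dsimp only
  rw [(hindep.indepFun hij).integral_fun_mul_eq_mul_integral (hmeas i) (hmeas j), hmean i,
    zero_mul]

section InnerProductSpace

variable {E ι : Type*} [NormedAddCommGroup E] [InnerProductSpace ℝ E] [Fintype ι]

theorem norm_add_sum_smul_sq (b : E) (v : ι → E) (x : ι → ℝ) :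
    ‖b + ∑ i, x i • v i‖ ^ 2
      = ‖b‖ ^ 2 + 2 * ∑ i, x i * ⟪b, v i⟫ + ∑ i, ∑ j, x i * x j * ⟪v i, v j⟫ := by
  rw [norm_add_sq_real, ← real_inner_self_eq_norm_sq (∑ i, x i • v i), sum_inner]
  simp only [inner_sum, real_inner_smul_left, real_inner_smul_right, Finset.mul_sum]
  congr 1
  exact Finset.sum_congr rfl fun i _ => Finset.sum_congr rfl fun j _ => by ring

variable {Ω : Type*} [MeasurableSpace Ω] {μ : Measure Ω} [IsProbabilityMeasure μ]

theorem integral_norm_add_sum_smul_sq {ξ : ι → Ω → ℝ} (hξ : ∀ i, MemLp (ξ i) 2 μ)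
    (hmean : ∀ i, ∫ ω, ξ i ω ∂μ = 0) (hvar : ∀ i, ∫ ω, ξ i ω ^ 2 ∂μ = 1)
    (horth : Pairwise fun i j => ∫ ω, ξ i ω * ξ j ω ∂μ = 0) (b : E) (v : ι → E) :
    ∫ ω, ‖b + ∑ i, ξ i ω • v i‖ ^ 2 ∂μ = ‖b‖ ^ 2 + ∑ i, ‖v i‖ ^ 2 := by
  have hint : ∀ i, Integrable (ξ i) μ := fun i => (hξ i).integrable one_le_two
  have hint₂ : ∀ i j, Integrable (fun ω => ξ i ω * ξ j ω) μ :=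
    fun i j => (hξ i).integrable_mul (hξ j)
  have hdiag : ∀ i, ∑ j, (∫ ω, ξ i ω * ξ j ω ∂μ) * ⟪v i, v j⟫ = ‖v i‖ ^ 2 := by
    intro i
    rw [Finset.sum_eq_single i (fun j _ hji => by rw [horth hji.symm, zero_mul])
      (fun hi => absurd (Finset.mem_univ i) hi)]
    simp_rw [← sq]
    rw [hvar, one_mul, real_inner_self_eq_norm_sq]
  have hlin : Integrable (fun ω => ∑ i, ξ i ω * ⟪b, v i⟫) μ :=
    integrable_finsetSum _ fun i _ => (hint i).mul_const _
  have hquad : ∀ i, Integrable (fun ω => ∑ j, ξ i ω * ξ j ω * ⟪v i, v j⟫) μ :=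
    fun i => integrable_finsetSum _ fun j _ => (hint₂ i j).mul_const _
  have hconst_lin : Integrable (fun ω => ‖b‖ ^ 2 + 2 * ∑ i, ξ i ω * ⟪b, v i⟫) μ :=
    (integrable_const _).add (hlin.const_mul 2)
  simp_rw [norm_add_sum_smul_sq]
  rw [integral_add hconst_lin (integrable_finsetSum _ fun i _ => hquad i),
    integral_add (integrable_const _) (hlin.const_mul 2), integral_const, integral_const_mul,
    integral_finsetSum _ fun i _ => (hint i).mul_const _,
    integral_finsetSum _ fun i _ => hquad i]
  simp_rw [integral_finsetSum _ fun j _ => (hint₂ _ j).mul_const _, integral_mul_const,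
    hmean, hdiag]
  simp

end InnerProductSpace

theorem sqrt_sq_add_mul_le {b β S K σ : ℝ} (hb : 0 ≤ b) (hbβ : b ≤ β) (hS : 0 ≤ S)
    (hSK : S ≤ K) (hσ : 0 ≤ σ) :
    √(b ^ 2 + σ ^ 2 * S) ≤ √K * σ + β := by
  have hKσ : 0 ≤ √K * σ := mul_nonneg (Real.sqrt_nonneg K) hσ
  rw [Real.sqrt_le_left (add_nonneg hKσ (hb.trans hbβ))]
  have hK : √K ^ 2 = K := Real.sq_sqrt (hS.trans hSK)
  nlinarith [mul_nonneg hKσ (hb.trans hbβ)]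

theorem noreg_upper_estimate_general
    (d n : ℕ)
    (Ω : Set (Fin d → ℝ))
    (h σ sa C₁ C₂ C₃ : ℝ)
    (hσ : 0 < σ)
    (hC₁ : 0 < C₁)
    (φ : Fin n → (Fin d → ℝ) → ℝ)
    (hφL2 : ∀ i, MemLp (φ i) 2 (volume.restrict Ω))
    (hφnorm : ∀ i, ((eLpNorm (φ i) 2 (volume.restrict Ω)).toReal) ^ 2 ≤ C₁ * h ^ d)
    (hnh : (n : ℝ) * h ^ d ≤ C₂)
    (f : (Fin d → ℝ) → ℝ) (hf : MemLp f 2 (volume.restrict Ω))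
    (c : Fin n → ℝ)
    (hbias : (eLpNorm (fun x => (∑ i, c i * φ i x) - f x) 2 (volume.restrict Ω)).toReal
      ≤ C₃ * h ^ sa)
    (Ω' : Type) [MeasurableSpace Ω'] (μ : Measure Ω') [IsProbabilityMeasure μ]
    (ξ : Fin n → Ω' → ℝ)
    (hξL2 : ∀ i, MemLp (ξ i) 2 μ)
    (hindep : iIndepFun ξ μ)
    (hmean : ∀ i, ∫ ω, ξ i ω ∂μ = 0)
    (hvar : ∀ i, ∫ ω, (ξ i ω) ^ 2 ∂μ = 1) :
    Real.sqrt (∫ ω, ((eLpNorm (fun x => (∑ i, (c i + σ * ξ i ω) * φ i x) - f x) 2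
        (volume.restrict Ω)).toReal) ^ 2 ∂μ)
      ≤ Real.sqrt (C₁ * C₂) * σ + C₃ * h ^ sa := by
  set Φ : Fin n → Lp ℝ 2 (volume.restrict Ω) := fun i => (hφL2 i).toLp (φ i)
  set B := (∑ i, c i • Φ i) - hf.toLp f
  have hnoisy : ∀ ω, (eLpNorm (fun x => (∑ i, (c i + σ * ξ i ω) * φ i x) - f x) 2
      (volume.restrict Ω)).toReal = ‖B + ∑ i, ξ i ω • (σ • Φ i)‖ := fun ω => by
    rw [eLpNorm_sum_mul_sub_toReal hφL2 hf (fun i => c i + σ * ξ i ω)]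
    congr 1
    simp only [B, add_smul, Finset.sum_add_distrib, mul_smul, smul_comm σ]
    abel
  have hmse : ∫ ω, ((eLpNorm (fun x => (∑ i, (c i + σ * ξ i ω) * φ i x) - f x) 2
      (volume.restrict Ω)).toReal) ^ 2 ∂μ = ‖B‖ ^ 2 + σ ^ 2 * ∑ i, ‖Φ i‖ ^ 2 := by
    simp_rw [hnoisy, integral_norm_add_sum_smul_sq hξL2 hmean hvar
      (hindep.integral_mul_eq_zero (fun i => (hξL2 i).1) hmean), norm_smul, mul_pow,
      Real.norm_eq_abs, sq_abs, Finset.mul_sum]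
  have hB : ‖B‖ ≤ C₃ * h ^ sa := (eLpNorm_sum_mul_sub_toReal hφL2 hf c).symm.trans_le hbias
  have hΦ : ∑ i, ‖Φ i‖ ^ 2 ≤ C₁ * C₂ := calc
    ∑ i, ‖Φ i‖ ^ 2 ≤ ∑ _i : Fin n, C₁ * h ^ d :=
      Finset.sum_le_sum fun i _ => by rw [Lp.norm_toLp]; exact hφnorm i
    _ = C₁ * (n * h ^ d) := by
      rw [Finset.sum_const, Finset.card_univ, Fintype.card_fin, nsmul_eq_mul]; ring
    _ ≤ C₁ * C₂ := mul_le_mul_of_nonneg_left hnh hC₁.le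
  rw [hmse]
  exact sqrt_sq_add_mul_le (norm_nonneg B) hB (by positivity) hΦ hσ.le

/-- **Upper estimate for the reconstruction error without regularisation**
(Proposition 3.1 in explicit form): if `‖φᵢ‖²_{L²(Ω)} ≤ C₁ h^d`, `n h^d ≤ C₂` and the
discretisation bias satisfies `‖∑ᵢ cᵢ φᵢ − f‖_{L²(Ω)} ≤ C₃ h^{s_a}`, then the root mean
squared error of the noisy reconstruction is at most `√(C₁ C₂) σ + C₃ h^{s_a}`. -/
theorem noreg_upper_estimate
    (d n : ℕ) (hd : 1 ≤ d) (hn : 1 ≤ n)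
    (Ω : Set (Fin d → ℝ)) (hΩ : MeasurableSet Ω)
    (h σ sa C₁ C₂ C₃ : ℝ)
    (hh : 0 < h) (hσ : 0 < σ) (hsa : 0 < sa)
    (hC₁ : 0 < C₁) (hC₂ : 0 < C₂) (hC₃ : 0 < C₃)
    (φ : Fin n → (Fin d → ℝ) → ℝ)
    (hφL2 : ∀ i, MemLp (φ i) 2 (volume.restrict Ω))
    (hφnorm : ∀ i, ((eLpNorm (φ i) 2 (volume.restrict Ω)).toReal) ^ 2 ≤ C₁ * h ^ d)
    (hnh : (n : ℝ) * h ^ d ≤ C₂)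
    (f : (Fin d → ℝ) → ℝ) (hf : MemLp f 2 (volume.restrict Ω))
    (c : Fin n → ℝ)
    (hbias : (eLpNorm (fun x => (∑ i, c i * φ i x) - f x) 2 (volume.restrict Ω)).toReal
      ≤ C₃ * h ^ sa)
    (Ω' : Type) [MeasurableSpace Ω'] (μ : Measure Ω') [IsProbabilityMeasure μ]
    (ξ : Fin n → Ω' → ℝ)
    (hξL2 : ∀ i, MemLp (ξ i) 2 μ)
    (hindep : iIndepFun ξ μ)
    (hmean : ∀ i, ∫ ω, ξ i ω ∂μ = 0)
    (hvar : ∀ i, ∫ ω, (ξ i ω) ^ 2 ∂μ = 1) :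
    Real.sqrt (∫ ω, ((eLpNorm (fun x => (∑ i, (c i + σ * ξ i ω) * φ i x) - f x) 2
        (volume.restrict Ω)).toReal) ^ 2 ∂μ)
      ≤ Real.sqrt (C₁ * C₂) * σ + C₃ * h ^ sa :=
  noreg_upper_estimate_general d n Ω h σ sa C₁ C₂ C₃ hσ hC₁ φ hφL2 hφnorm hnh f hf c hbias Ω' μ ξ
    hξL2 hindep hmean hvar
end

section
/- Let d ≥ 1, Ω ⊆ ℝ^d measurable, K ∈ L¹(ℝ^d) ∩ L²(ℝ^d), β, h > 0, and set K_β(x) := β^{−d} K(x/β). Let φ ∈ L¹(Ω) ∩ L²(Ω), extended by zero to ℝ^d, and let C₁ > 0 satisfy ‖φ‖_{L²(Ω)} ≤ C₁ h^{d/2} and ‖φ‖_{L¹(Ω)} ≤ C₁ h^d. Then ‖K_β ∗ φ‖_{L²(ℝ^d)} ≤ C₁ max(‖K‖_{L¹(ℝ^d)}, ‖K‖_{L²(ℝ^d)}) · min(β^{−1} h, 1)^{d/2} · h^{d/2}. -/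
/-!
Pointwise `|K_β ∗ φ| ≤ |K_β| ∗ |φ|`, so everything reduces to Young's inequality for nonnegative
functions. Its `L¹ ∗ L² → L²` form follows from Cauchy–Schwarz with the weight `f (x - ·)`,
`(∫ f (x - y) g y)² ≤ ‖f‖₁ ∫ f (x - y) g(y)²`, integrated in `x` by Tonelli; the `L² ∗ L¹` form
follows by commutativity of convolution. A dilation by `β` gives `‖K_β‖₁ = ‖K‖₁` and
`‖K_β‖₂ = β^{-d/2} ‖K‖₂`; the first bound is used when `h ≥ β`, the second when `h ≤ β`.
-/

open MeasureTheory Module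
open scoped ENNReal

section WeightedCauchySchwarz
variable {α : Type*} [MeasurableSpace α] {μ : Measure α}

theorem lintegral_mul_rpow_two_le {w u : α → ℝ≥0∞} (hw : AEMeasurable w μ)
    (hu : AEMeasurable u μ) :
    (∫⁻ a, w a * u a ∂μ) ^ (2 : ℝ) ≤ (∫⁻ a, w a ∂μ) * ∫⁻ a, w a * u a ^ (2 : ℝ) ∂μ := by
  have hsplit : ∀ a, w a ^ (2⁻¹ : ℝ) * (w a * u a ^ (2 : ℝ)) ^ (2⁻¹ : ℝ) = w a * u a := by
    intro a
    rw [ENNReal.mul_rpow_of_nonneg _ _ (by norm_num), ← ENNReal.rpow_mul, ← mul_assoc,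
      ← ENNReal.rpow_add_of_nonneg _ _ (by norm_num) (by norm_num)]
    norm_num
  have holder : ∫⁻ a, w a ^ (2⁻¹ : ℝ) * (w a * u a ^ (2 : ℝ)) ^ (2⁻¹ : ℝ) ∂μ
      ≤ (∫⁻ a, w a ∂μ) ^ (2⁻¹ : ℝ) * (∫⁻ a, w a * u a ^ (2 : ℝ) ∂μ) ^ (2⁻¹ : ℝ) :=
    ENNReal.lintegral_mul_norm_pow_le hw (hw.mul (hu.pow_const 2)) (by norm_num) (by norm_num)
      (by norm_num)
  simp only [hsplit] at holder
  calc (∫⁻ a, w a * u a ∂μ) ^ (2 : ℝ)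
      ≤ ((∫⁻ a, w a ∂μ) ^ (2⁻¹ : ℝ) * (∫⁻ a, w a * u a ^ (2 : ℝ) ∂μ) ^ (2⁻¹ : ℝ)) ^ (2 : ℝ) :=
        ENNReal.rpow_le_rpow holder (by norm_num)
    _ = (∫⁻ a, w a ∂μ) * ∫⁻ a, w a * u a ^ (2 : ℝ) ∂μ := by
        rw [ENNReal.mul_rpow_of_nonneg _ _ (by norm_num), ← ENNReal.rpow_mul, ← ENNReal.rpow_mul]
        norm_num

end WeightedCauchySchwarz

section Pointwise
variable {G R : Type*} [Sub G] [MeasurableSpace G] {μ : Measure G} [NormedRing R]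
  [NormedSpace ℝ R]

theorem eLpNorm_convolution_le_lconvolution (f g : G → R) (p : ℝ≥0∞) :
    eLpNorm (fun x => ∫ y, f (x - y) * g y ∂μ) p μ
      ≤ eLpNorm (fun x => ∫⁻ y, ‖f (x - y)‖ₑ * ‖g y‖ₑ ∂μ) p μ := by
  refine eLpNorm_mono_enorm fun x => ?_
  rw [enorm_eq_self]
  exact (enorm_integral_le_lintegral_enorm _).trans
    (lintegral_mono fun y => by
      simpa only [enorm_eq_nnnorm, ← ENNReal.coe_mul, ENNReal.coe_le_coe] using nnnorm_mul_le _ _)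

end Pointwise

section Young
variable {G : Type*} [AddCommGroup G] [MeasurableSpace G] [MeasurableAdd₂ G] [MeasurableNeg G]
  {μ : Measure G} [μ.IsAddLeftInvariant] [μ.IsNegInvariant]

theorem lintegral_sub_mul_comm (f g : G → ℝ≥0∞) (x : G) :
    ∫⁻ y, f (x - y) * g y ∂μ = ∫⁻ y, g (x - y) * f y ∂μ := by
  rw [← lintegral_sub_left_eq_self (fun y => f (x - y) * g y) x]
  refine lintegral_congr fun y => ?_
  rw [sub_sub_cancel, mul_comm]

variable [SFinite μ]

theorem lintegral_lconvolution_rpow_two_le {f g : G → ℝ≥0∞} (hf : AEMeasurable f μ)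
    (hg : AEMeasurable g μ) :
    ∫⁻ x, (∫⁻ y, f (x - y) * g y ∂μ) ^ (2 : ℝ) ∂μ
      ≤ (∫⁻ z, f z ∂μ) ^ (2 : ℝ) * ∫⁻ y, g y ^ (2 : ℝ) ∂μ := by
  have hprod : AEMeasurable (fun p : G × G => f (p.1 - p.2) * g p.2 ^ (2 : ℝ)) (μ.prod μ) :=
    (hf.comp_quasiMeasurePreserving (quasiMeasurePreserving_sub_of_right_invariant μ μ)).mul
      ((hg.comp_quasiMeasurePreserving Measure.quasiMeasurePreserving_snd).pow_const _)
  calc ∫⁻ x, (∫⁻ y, f (x - y) * g y ∂μ) ^ (2 : ℝ) ∂μ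
      ≤ ∫⁻ x, (∫⁻ z, f z ∂μ) * ∫⁻ y, f (x - y) * g y ^ (2 : ℝ) ∂μ ∂μ := by
        refine lintegral_mono fun x => ?_
        have hfx : AEMeasurable (fun y => f (x - y)) μ :=
          hf.comp_quasiMeasurePreserving (quasiMeasurePreserving_sub_left μ x)
        rw [← lintegral_sub_left_eq_self f x]
        exact lintegral_mul_rpow_two_le hfx hg
    _ = (∫⁻ z, f z ∂μ) * ∫⁻ y, ∫⁻ x, f (x - y) * g y ^ (2 : ℝ) ∂μ ∂μ := by
        rw [lintegral_const_mul'' _ hprod.lintegral_prod_right',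
          lintegral_lintegral_swap hprod]
    _ = (∫⁻ z, f z ∂μ) * ∫⁻ y, (∫⁻ z, f z ∂μ) * g y ^ (2 : ℝ) ∂μ := by
        congr 1
        refine lintegral_congr fun y => ?_
        have hfy : AEMeasurable (fun x => f (x - y)) μ :=
          hf.comp_quasiMeasurePreserving (measurePreserving_sub_right μ y).quasiMeasurePreserving
        rw [lintegral_mul_const'' _ hfy, lintegral_sub_right_eq_self f y]
    _ = (∫⁻ z, f z ∂μ) ^ (2 : ℝ) * ∫⁻ y, g y ^ (2 : ℝ) ∂μ := by
        rw [lintegral_const_mul'' _ (hg.pow_const _), ← mul_assoc, ENNReal.rpow_two, sq]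

theorem eLpNorm_lconvolution_le_one_two {f g : G → ℝ≥0∞} (hf : AEMeasurable f μ)
    (hg : AEMeasurable g μ) :
    eLpNorm (fun x => ∫⁻ y, f (x - y) * g y ∂μ) 2 μ ≤ eLpNorm f 1 μ * eLpNorm g 2 μ := by
  simp only [eLpNorm_one_eq_lintegral_enorm,
    eLpNorm_eq_lintegral_rpow_enorm_toReal two_ne_zero ENNReal.ofNat_ne_top, enorm_eq_self,
    ENNReal.toReal_ofNat]
  calc (∫⁻ x, (∫⁻ y, f (x - y) * g y ∂μ) ^ (2 : ℝ) ∂μ) ^ (1 / 2 : ℝ)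
      ≤ ((∫⁻ z, f z ∂μ) ^ (2 : ℝ) * ∫⁻ y, g y ^ (2 : ℝ) ∂μ) ^ (1 / 2 : ℝ) :=
        ENNReal.rpow_le_rpow (lintegral_lconvolution_rpow_two_le hf hg) (by norm_num)
    _ = (∫⁻ z, f z ∂μ) * (∫⁻ y, g y ^ (2 : ℝ) ∂μ) ^ (1 / 2 : ℝ) := by
        rw [ENNReal.mul_rpow_of_nonneg _ _ (by norm_num), ← ENNReal.rpow_mul]
        norm_num

theorem eLpNorm_lconvolution_le_two_one {f g : G → ℝ≥0∞} (hf : AEMeasurable f μ)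
    (hg : AEMeasurable g μ) :
    eLpNorm (fun x => ∫⁻ y, f (x - y) * g y ∂μ) 2 μ ≤ eLpNorm f 2 μ * eLpNorm g 1 μ := by
  simp only [lintegral_sub_mul_comm f g, mul_comm (eLpNorm f 2 μ)]
  exact eLpNorm_lconvolution_le_one_two hg hf

variable {R : Type*} [NormedRing R] [NormedSpace ℝ R]

theorem eLpNorm_convolution_le_one_two {f g : G → R} (hf : AEStronglyMeasurable f μ)
    (hg : AEStronglyMeasurable g μ) :
    eLpNorm (fun x => ∫ y, f (x - y) * g y ∂μ) 2 μ ≤ eLpNorm f 1 μ * eLpNorm g 2 μ := by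
  have young := eLpNorm_lconvolution_le_one_two hf.enorm hg.enorm
  rw [eLpNorm_enorm, eLpNorm_enorm] at young
  exact (eLpNorm_convolution_le_lconvolution f g 2).trans young

theorem eLpNorm_convolution_le_two_one {f g : G → R} (hf : AEStronglyMeasurable f μ)
    (hg : AEStronglyMeasurable g μ) :
    eLpNorm (fun x => ∫ y, f (x - y) * g y ∂μ) 2 μ ≤ eLpNorm f 2 μ * eLpNorm g 1 μ := by
  have young := eLpNorm_lconvolution_le_two_one hf.enorm hg.enorm
  rw [eLpNorm_enorm, eLpNorm_enorm] at young
  exact (eLpNorm_convolution_le_lconvolution f g 2).trans young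

end Young

section Dilation
variable {E F : Type*} [NormedAddCommGroup E] [NormedSpace ℝ E] [FiniteDimensional ℝ E]
  [MeasurableSpace E] [BorelSpace E] {μ : Measure E} [μ.IsAddHaarMeasure] [NormedAddCommGroup F]

theorem eLpNorm_comp_smul (f : E → F) {r : ℝ} (hr : r ≠ 0) {p : ℝ≥0∞} (hp : p ≠ ∞) :
    eLpNorm (fun x => f (r • x)) p μ
      = ENNReal.ofReal (|r| ^ (-(finrank ℝ E / p.toReal))) * eLpNorm f p μ := by
  have hmap := (measurableEmbedding_const_smul₀ (α := E) hr).eLpNorm_map_measure (g := f) (p := p)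
    (μ := μ)
  rw [Measure.map_addHaar_smul μ hr, eLpNorm_smul_measure_of_ne_top hp] at hmap
  rw [← Function.comp_def, ← hmap, smul_eq_mul, ENNReal.ofReal_rpow_of_nonneg (abs_nonneg _)
    (by positivity), abs_inv, abs_pow, ← Real.rpow_natCast, ← Real.rpow_neg (abs_nonneg _),
    ← Real.rpow_mul (abs_nonneg _), ENNReal.toReal_div, ENNReal.toReal_one]
  congr 3
  ring

theorem eLpNorm_dilation (K : E → ℝ) {β : ℝ} (hβ : 0 < β) {p : ℝ≥0∞} (hp : p ≠ ∞) :
    eLpNorm (fun z => (β ^ finrank ℝ E)⁻¹ * K (β⁻¹ • z)) p μ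
      = ENNReal.ofReal (β ^ (finrank ℝ E / p.toReal - finrank ℝ E)) * eLpNorm K p μ := by
  have hsmul : (fun z => (β ^ finrank ℝ E)⁻¹ * K (β⁻¹ • z))
      = (β ^ finrank ℝ E)⁻¹ • fun z => K (β⁻¹ • z) := rfl
  rw [hsmul, eLpNorm_const_smul, eLpNorm_comp_smul _ (inv_ne_zero hβ.ne') hp, ← mul_assoc,
    Real.enorm_eq_ofReal_abs, ← ENNReal.ofReal_mul (abs_nonneg _)]
  congr 2
  rw [abs_of_pos (by positivity), abs_of_pos (by positivity), Real.inv_rpow hβ.le,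
    Real.rpow_neg hβ.le, inv_inv, ← Real.rpow_natCast, ← Real.rpow_neg hβ.le, ← Real.rpow_add hβ]
  congr 1
  ring

theorem eLpNorm_dilation_convolution_le_one_two {K φ : E → ℝ} (hK : AEStronglyMeasurable K μ)
    (hφ : AEStronglyMeasurable φ μ) {β : ℝ} (hβ : 0 < β) :
    eLpNorm (fun x => ∫ y, (β ^ finrank ℝ E)⁻¹ * K (β⁻¹ • (x - y)) * φ y ∂μ) 2 μ
      ≤ eLpNorm K 1 μ * eLpNorm φ 2 μ := by
  have hKβ : AEStronglyMeasurable (fun z => (β ^ finrank ℝ E)⁻¹ * K (β⁻¹ • z)) μ :=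
    (hK.comp_quasiMeasurePreserving (Measure.quasiMeasurePreserving_smul μ
      (inv_ne_zero hβ.ne'))).const_mul _
  have hnorm := eLpNorm_dilation (μ := μ) K hβ ENNReal.one_ne_top
  rw [ENNReal.toReal_one, div_one, sub_self, Real.rpow_zero, ENNReal.ofReal_one, one_mul] at hnorm
  have young := eLpNorm_convolution_le_one_two hKβ hφ
  rw [hnorm] at young
  exact young

theorem eLpNorm_dilation_convolution_le_two_one {K φ : E → ℝ} (hK : AEStronglyMeasurable K μ)
    (hφ : AEStronglyMeasurable φ μ) {β : ℝ} (hβ : 0 < β) :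
    eLpNorm (fun x => ∫ y, (β ^ finrank ℝ E)⁻¹ * K (β⁻¹ • (x - y)) * φ y ∂μ) 2 μ
      ≤ ENNReal.ofReal (β ^ (-(finrank ℝ E / 2 : ℝ))) * eLpNorm K 2 μ * eLpNorm φ 1 μ := by
  have hKβ : AEStronglyMeasurable (fun z => (β ^ finrank ℝ E)⁻¹ * K (β⁻¹ • z)) μ :=
    (hK.comp_quasiMeasurePreserving (Measure.quasiMeasurePreserving_smul μ
      (inv_ne_zero hβ.ne'))).const_mul _
  have hnorm := eLpNorm_dilation (μ := μ) K hβ (p := 2) ENNReal.ofNat_ne_top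
  rw [ENNReal.toReal_ofNat, show (finrank ℝ E / 2 - finrank ℝ E : ℝ) = -(finrank ℝ E / 2) by ring]
    at hnorm
  have young := eLpNorm_convolution_le_two_one hKβ hφ
  rw [hnorm] at young
  exact young

theorem toReal_eLpNorm_dilation_convolution_le {K φ : E → ℝ} (hK1 : Integrable K μ)
    (hK2 : MemLp K 2 μ) (hφ1 : Integrable φ μ) (hφ2 : MemLp φ 2 μ) {β : ℝ} (hβ : 0 < β) :
    (eLpNorm (fun x => ∫ y, (β ^ finrank ℝ E)⁻¹ * K (β⁻¹ • (x - y)) * φ y ∂μ) 2 μ).toReal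
      ≤ min ((eLpNorm K 1 μ).toReal * (eLpNorm φ 2 μ).toReal)
        (β ^ (-(finrank ℝ E / 2 : ℝ)) * (eLpNorm K 2 μ).toReal * (eLpNorm φ 1 μ).toReal) := by
  have hK1fin := (memLp_one_iff_integrable.2 hK1).eLpNorm_ne_top
  have hφ1fin := (memLp_one_iff_integrable.2 hφ1).eLpNorm_ne_top
  have hK2fin := hK2.eLpNorm_ne_top
  have hφ2fin := hφ2.eLpNorm_ne_top
  refine le_min ?_ ?_
  · refine (ENNReal.toReal_mono (by finiteness) (eLpNorm_dilation_convolution_le_one_two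
      hK1.aestronglyMeasurable hφ1.aestronglyMeasurable hβ)).trans_eq ?_
    rw [ENNReal.toReal_mul]
  · refine (ENNReal.toReal_mono (by finiteness) (eLpNorm_dilation_convolution_le_two_one
      hK1.aestronglyMeasurable hφ1.aestronglyMeasurable hβ)).trans_eq ?_
    rw [ENNReal.toReal_mul, ENNReal.toReal_mul, ENNReal.toReal_ofReal (by positivity)]

end Dilation

theorem mollified_basis_variance_estimate_general
    (d : ℕ)
    (Ω : Set (Fin d → ℝ))
    (K : (Fin d → ℝ) → ℝ) (hK1 : Integrable K volume) (hK2 : MemLp K 2 volume)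
    (β h : ℝ) (hβ : 0 < β) (hh : 0 < h)
    (φ : (Fin d → ℝ) → ℝ)
    (hφsupp : ∀ x, x ∉ Ω → φ x = 0)
    (hφ1 : Integrable φ (volume.restrict Ω)) (hφ2 : MemLp φ 2 (volume.restrict Ω))
    (C₁ : ℝ)
    (hφL2 : (eLpNorm φ 2 (volume.restrict Ω)).toReal ≤ C₁ * h ^ ((d : ℝ) / 2))
    (hφL1 : (eLpNorm φ 1 (volume.restrict Ω)).toReal ≤ C₁ * h ^ d) :
    (eLpNorm (fun x => ∫ y, (β ^ d)⁻¹ * K (β⁻¹ • (x - y)) * φ y) 2 volume).toReal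
      ≤ C₁ * max ((eLpNorm K 1 volume).toReal) ((eLpNorm K 2 volume).toReal)
        * (min (β⁻¹ * h) 1) ^ ((d : ℝ) / 2) * h ^ ((d : ℝ) / 2) := by
  have hsupp : Function.support φ ⊆ Ω := fun x hx => by_contra fun hxΩ => hx (hφsupp x hxΩ)
  have hφ : Integrable φ := (integrableOn_iff_integrable_of_support_subset hsupp).1 hφ1
  have hφ2' : MemLp φ 2 volume := ⟨hφ.aestronglyMeasurable,
    eLpNorm_restrict_eq_of_support_subset hsupp ▸ hφ2.eLpNorm_lt_top⟩
  rw [eLpNorm_restrict_eq_of_support_subset hsupp] at hφL1 hφL2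
  have bound := toReal_eLpNorm_dilation_convolution_le hK1 hK2 hφ hφ2' hβ
  rw [finrank_fin_fun] at bound
  set M := max (eLpNorm K 1 volume).toReal (eLpNorm K 2 volume).toReal
  rcases le_total (β⁻¹ * h) 1 with hβh | hβh
  · rw [min_eq_left hβh]
    calc _ ≤ β ^ (-((d : ℝ) / 2)) * (eLpNorm K 2 volume).toReal * (eLpNorm φ 1 volume).toReal :=
          bound.trans (min_le_right _ _)
      _ ≤ β ^ (-((d : ℝ) / 2)) * M * (C₁ * h ^ d) := by gcongr; exact le_max_right _ _
      _ = _ := by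
          rw [Real.mul_rpow (by positivity) hh.le, Real.inv_rpow hβ.le, ← Real.rpow_neg hβ.le,
            ← Real.rpow_natCast, ← add_halves (d : ℝ), Real.rpow_add hh, add_halves]
          ring
  · rw [min_eq_right hβh, Real.one_rpow, mul_one]
    calc _ ≤ (eLpNorm K 1 volume).toReal * (eLpNorm φ 2 volume).toReal :=
          bound.trans (min_le_left _ _)
      _ ≤ M * (C₁ * h ^ ((d : ℝ) / 2)) := by gcongr; exact le_max_left _ _
      _ = _ := by ring

/-- **Variance estimate for mollified basis functions** (key estimate in the proof of
Proposition 3.2): if `K ∈ L¹ ∩ L²(ℝ^d)`, `K_β = β^{−d} K(·/β)`, and `φ` is supported in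
`Ω` with `‖φ‖_{L²(Ω)} ≤ C₁ h^{d/2}` and `‖φ‖_{L¹(Ω)} ≤ C₁ h^d`, then
`‖K_β ∗ φ‖_{L²(ℝ^d)} ≤ C₁ max(‖K‖_{L¹}, ‖K‖_{L²}) min(β⁻¹ h, 1)^{d/2} h^{d/2}`. -/
theorem mollified_basis_variance_estimate
    (d : ℕ) (hd : 1 ≤ d)
    (Ω : Set (Fin d → ℝ)) (hΩ : MeasurableSet Ω)
    (K : (Fin d → ℝ) → ℝ) (hK1 : Integrable K volume) (hK2 : MemLp K 2 volume)
    (β h : ℝ) (hβ : 0 < β) (hh : 0 < h)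
    (φ : (Fin d → ℝ) → ℝ)
    (hφsupp : ∀ x, x ∉ Ω → φ x = 0)
    (hφ1 : Integrable φ (volume.restrict Ω)) (hφ2 : MemLp φ 2 (volume.restrict Ω))
    (C₁ : ℝ) (hC₁ : 0 < C₁)
    (hφL2 : (eLpNorm φ 2 (volume.restrict Ω)).toReal ≤ C₁ * h ^ ((d : ℝ) / 2))
    (hφL1 : (eLpNorm φ 1 (volume.restrict Ω)).toReal ≤ C₁ * h ^ d) :
    (eLpNorm (fun x => ∫ y, (β ^ d)⁻¹ * K (β⁻¹ • (x - y)) * φ y) 2 volume).toReal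
      ≤ C₁ * max ((eLpNorm K 1 volume).toReal) ((eLpNorm K 2 volume).toReal)
        * (min (β⁻¹ * h) 1) ^ ((d : ℝ) / 2) * h ^ ((d : ℝ) / 2) :=
  mollified_basis_variance_estimate_general d Ω K hK1 hK2 β h hβ hh φ hφsupp hφ1 hφ2 C₁ hφL2 hφL1
end

section
/- Let d > 0 and s_a > s_r > 0 be real numbers, and set λ_M := s_a + (d/2)(s_a/s_r − 1). Then for every real λ with s_r < λ < λ_M, one has min(λ, s_a) > s_r (2 λ + d)/(2 s_r + d). -/
/-! Writing `sr (2λ + d) = λ (2 sr + d) - d (λ - sr)` shows that the regularised exponent lies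
below `λ` as soon as `λ > sr`; multiplying out by `2 sr + d` shows that it lies below `s_a`
exactly when `λ < λ_M`. -/

/-- With bandwidth `β*` the error is of order `n ^ (-regRate s_r d λ / d)`. -/
noncomputable def regRate (sr d l : ℝ) : ℝ := sr * (2 * l + d) / (2 * sr + d)

theorem regRate_lt_self {sr d l : ℝ} (hsr : 0 ≤ sr) (hd : 0 < d) (hl : sr < l) :
    regRate sr d l < l := by
  have hden : 0 < 2 * sr + d := by linarith
  rw [regRate, div_lt_iff₀ hden]
  nlinarith

theorem regRate_lt_of_lt {sa sr d l : ℝ} (hsr : 0 < sr) (hd : 0 ≤ d)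
    (hl : l < sa + d / 2 * (sa / sr - 1)) : regRate sr d l < sa := by
  have hden : 0 < 2 * sr + d := by linarith
  have hl' : l * sr < (sa + d / 2 * (sa / sr - 1)) * sr := mul_lt_mul_of_pos_right hl hsr
  rw [add_mul, mul_assoc, sub_mul, div_mul_cancel₀ sa hsr.ne'] at hl'
  rw [regRate, div_lt_iff₀ hden]
  linarith

theorem noreg_beats_reg_exponents_general
    (d sa sr : ℝ) (hd : 0 < d) (hsr : 0 < sr) :
    ∀ l : ℝ, sr < l → l < sa + (d / 2) * (sa / sr - 1) →
      sr * (2 * l + d) / (2 * sr + d) < min l sa :=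
  fun _ hl hlM => lt_min (regRate_lt_self hsr.le hd hl) (regRate_lt_of_lt hsr hd.le hlM)

/-- **It is strictly better not to regularise for `s_r < λ < λ_M`** (exponent comparison
behind Theorem 1.2 / Proposition 4.4): for `d > 0` and `s_a > s_r > 0`, setting
`λ_M = s_a + (d/2)(s_a/s_r − 1)`, every `λ` with `s_r < λ < λ_M` satisfies
`min(λ, s_a) > s_r (2λ + d)/(2 s_r + d)`. -/
theorem noreg_beats_reg_exponents
    (d sa sr : ℝ) (hd : 0 < d) (hsr : 0 < sr) (hsasr : sr < sa) :
    ∀ l : ℝ, sr < l → l < sa + (d / 2) * (sa / sr - 1) →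
      sr * (2 * l + d) / (2 * sr + d) < min l sa :=
  noreg_beats_reg_exponents_general d sa sr hd hsr
end

section
/- Let d, s_r, s_a > 0 be real numbers, set λ_M := s_a + (d/2)(s_a/s_r − 1), and let λ be a real number with 0 ≤ λ < λ_M. Set γ := s_r (2 λ + d)/(2 s_r + d) and, for h ∈ (0, 1], β*(h) := h^{(2λ+d)/(2 s_r + d)}. Let E : (0, 1] → [0, ∞) and constants C₁, c₂, C₃ > 0 be such that for every h ∈ (0, 1]: E(h) ≤ C₁ ( min( h^λ, β*(h)^{s_r} ) + h^{s_a} + β*(h)^{s_r} ) and E(h)² ≥ c₂ β*(h)^{s_r} ( β*(h)^{s_r} − C₃ h^{s_a} ). Then there exist constants c, C, h₀ > 0 such that c h^{γ} ≤ E(h) ≤ C h^{γ} for every h ∈ (0, h₀]. -/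
/-!
Both bounds are driven by `β*(h)^{s_r} = h^γ`. The threshold condition `λ < λ_M` is exactly
`γ < s_a`, so `h^{s_a} = h^γ · h^{s_a - γ}` is negligible against `h^γ` as `h → 0`: in the upper
bound it is at most `h^γ`, and in the lower bound `C₃ h^{s_a} ≤ h^γ / 2` eventually, which leaves
`E(h)² ≥ (c₂ / 2) h^{2γ}`.
-/

open Filter Set Topology

theorem rate_exponent_lt_of_lt_threshold {d sr sa l : ℝ} (hsr : 0 < sr) (hden : 0 < 2 * sr + d)
    (hlM : l < sa + (d / 2) * (sa / sr - 1)) :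
    sr * (2 * l + d) / (2 * sr + d) < sa := by
  rw [div_lt_iff₀ hden]
  have h : sa + (d / 2) * (sa / sr - 1) = (sa * (2 * sr + d) - sr * d) / (2 * sr) := by
    field_simp
    ring
  rw [h, lt_div_iff₀ (by positivity)] at hlM
  linarith

theorem eventually_const_mul_rpow_le_half_rpow {g s : ℝ} (C : ℝ) (hgs : g < s) :
    ∀ᶠ h in 𝓝[>] (0 : ℝ), C * h ^ s ≤ h ^ g / 2 := by
  have hlim : Tendsto (fun h : ℝ => C * h ^ (s - g)) (𝓝[>] 0) (𝓝 0) := by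
    have h : Tendsto (fun h : ℝ => C * h ^ (s - g)) (𝓝[>] 0) (𝓝 (C * 0 ^ (s - g))) :=
      ((Real.continuousAt_rpow_const 0 (s - g) (Or.inr (sub_pos.2 hgs).le)).const_mul
        C).tendsto.mono_left nhdsWithin_le_nhds
    rwa [Real.zero_rpow (sub_pos.2 hgs).ne', mul_zero] at h
  filter_upwards [hlim.eventually (ge_mem_nhds one_half_pos), self_mem_nhdsWithin]
    with h hsmall (hh : 0 < h)
  have hsplit : h ^ s = h ^ (s - g) * h ^ g := by
    rw [← Real.rpow_add hh, sub_add_cancel]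
  rw [hsplit, ← mul_assoc, div_eq_mul_inv, mul_comm (h ^ g)]
  exact mul_le_mul_of_nonneg_right (by linarith) (Real.rpow_nonneg hh.le g)

theorem exists_forall_of_eventually_nhdsGT {a : ℝ} {P : ℝ → Prop} (hP : ∀ᶠ h in 𝓝[>] a, P h) :
    ∃ h₀, a < h₀ ∧ ∀ h, a < h → h ≤ h₀ → P h := by
  obtain ⟨u, hu, hsub⟩ := mem_nhdsGT_iff_exists_Ioc_subset.1 hP
  exact ⟨u, hu, fun h ha hu => hsub ⟨ha, hu⟩⟩

theorem sqrt_half_mul_le_of_mul_sub_le_sq {c x y e : ℝ} (hc : 0 < c) (hx : 0 ≤ x) (he : 0 ≤ e)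
    (hy : y ≤ x / 2) (h : c * x * (x - y) ≤ e ^ 2) :
    √(c / 2) * x ≤ e := by
  have hsq : (√(c / 2) * x) ^ 2 ≤ e ^ 2 := by
    rw [mul_pow, Real.sq_sqrt (by positivity)]
    nlinarith [mul_le_mul_of_nonneg_left hy (mul_nonneg hc.le hx)]
  exact (pow_le_pow_iff_left₀ (by positivity) he two_ne_zero).1 hsq

theorem reg_error_exact_rate_general
    (d sr sa l : ℝ) (hd : 0 < d) (hsr : 0 < sr)
    (hlM : l < sa + (d / 2) * (sa / sr - 1))
    (E : ℝ → ℝ) (C₁ c₂ C₃ : ℝ) (hC₁ : 0 < C₁) (hc₂ : 0 < c₂)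
    (hEnonneg : ∀ h : ℝ, 0 < h → h ≤ 1 → 0 ≤ E h)
    (hupper : ∀ h : ℝ, 0 < h → h ≤ 1 →
      E h ≤ C₁ * (min (h ^ l) ((h ^ ((2 * l + d) / (2 * sr + d))) ^ sr)
        + h ^ sa + (h ^ ((2 * l + d) / (2 * sr + d))) ^ sr))
    (hlower : ∀ h : ℝ, 0 < h → h ≤ 1 →
      c₂ * (h ^ ((2 * l + d) / (2 * sr + d))) ^ sr
          * ((h ^ ((2 * l + d) / (2 * sr + d))) ^ sr - C₃ * h ^ sa)
        ≤ (E h) ^ 2) :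
    ∃ c C h₀ : ℝ, 0 < c ∧ 0 < C ∧ 0 < h₀ ∧
      ∀ h : ℝ, 0 < h → h ≤ h₀ →
        c * h ^ (sr * (2 * l + d) / (2 * sr + d)) ≤ E h ∧
        E h ≤ C * h ^ (sr * (2 * l + d) / (2 * sr + d)) := by
  set g := sr * (2 * l + d) / (2 * sr + d)
  have hgsa : g < sa := rate_exponent_lt_of_lt_threshold hsr (by positivity) hlM
  have hβ : ∀ h : ℝ, 0 < h → (h ^ ((2 * l + d) / (2 * sr + d))) ^ sr = h ^ g := fun h hh => by
    rw [← Real.rpow_mul hh.le, div_mul_eq_mul_div, mul_comm]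
  obtain ⟨h₀, hh₀, hsmall⟩ := exists_forall_of_eventually_nhdsGT
    ((eventually_const_mul_rpow_le_half_rpow C₃ hgsa).and (Ioo_mem_nhdsGT one_pos))
  refine ⟨√(c₂ / 2), 3 * C₁, h₀, by positivity, by positivity, hh₀, fun h hh hle => ?_⟩
  obtain ⟨hC₃, -, hh1⟩ := hsmall h hh hle
  have hgpos : 0 < h ^ g := Real.rpow_pos_of_pos hh g
  have hsa_le : h ^ sa ≤ h ^ g := Real.rpow_le_rpow_of_exponent_ge hh hh1.le hgsa.le
  have hup := hupper h hh hh1.le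
  rw [hβ h hh] at hup
  refine ⟨sqrt_half_mul_le_of_mul_sub_le_sq hc₂ hgpos.le (hEnonneg h hh hh1.le) hC₃
    (hβ h hh ▸ hlower h hh hh1.le), hup.trans ?_⟩
  nlinarith [min_le_right (h ^ l) (h ^ g)]

/-- **Exact rate of the regularised error below the threshold `λ_M`**
(Proposition 4.2 in conditional form): let `γ = s_r (2λ + d)/(2 s_r + d)` and
`β*(h) = h^{(2λ+d)/(2 s_r + d)}`. If `E : (0,1] → [0,∞)` satisfies
`E(h) ≤ C₁ (min(h^λ, β*(h)^{s_r}) + h^{s_a} + β*(h)^{s_r})` and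
`E(h)² ≥ c₂ β*(h)^{s_r} (β*(h)^{s_r} − C₃ h^{s_a})` for all `h ∈ (0,1]`, and
`0 ≤ λ < λ_M = s_a + (d/2)(s_a/s_r − 1)`, then `E(h) ∼ h^γ` for small `h`. -/
theorem reg_error_exact_rate
    (d sr sa l : ℝ) (hd : 0 < d) (hsr : 0 < sr) (hsa : 0 < sa)
    (hl0 : 0 ≤ l) (hlM : l < sa + (d / 2) * (sa / sr - 1))
    (E : ℝ → ℝ) (C₁ c₂ C₃ : ℝ) (hC₁ : 0 < C₁) (hc₂ : 0 < c₂) (hC₃ : 0 < C₃)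
    (hEnonneg : ∀ h : ℝ, 0 < h → h ≤ 1 → 0 ≤ E h)
    (hupper : ∀ h : ℝ, 0 < h → h ≤ 1 →
      E h ≤ C₁ * (min (h ^ l) ((h ^ ((2 * l + d) / (2 * sr + d))) ^ sr)
        + h ^ sa + (h ^ ((2 * l + d) / (2 * sr + d))) ^ sr))
    (hlower : ∀ h : ℝ, 0 < h → h ≤ 1 →
      c₂ * (h ^ ((2 * l + d) / (2 * sr + d))) ^ sr
          * ((h ^ ((2 * l + d) / (2 * sr + d))) ^ sr - C₃ * h ^ sa)
        ≤ (E h) ^ 2) :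
    ∃ c C h₀ : ℝ, 0 < c ∧ 0 < C ∧ 0 < h₀ ∧
      ∀ h : ℝ, 0 < h → h ≤ h₀ →
        c * h ^ (sr * (2 * l + d) / (2 * sr + d)) ≤ E h ∧
        E h ≤ C * h ^ (sr * (2 * l + d) / (2 * sr + d)) :=
  reg_error_exact_rate_general d sr sa l hd hsr hlM E C₁ c₂ C₃ hC₁ hc₂ hEnonneg hupper hlower
end
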